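/- Let A be a unital Banach algebra and X a unit-linked Banach A-bimodule. Suppose f : A → X with f(0) = 0, g : A → X with g(0) = g(1) = 0, and φ : A × A × A → ℝ≥0 satisfy: max{‖f(λa + λb + c²) − λf(a) − λf(b) − c·f(c) − g(c)·c‖, ‖g(λab + λc) − λa·g(b) − λ·g(a)·b − λg(c)‖} ≤ φ(a,b,c) for all a,b,c ∈ A and all λ ∈ ℂ with |λ| = 1, and that φ̃(a,b,c) := (1/2) Σ_{i=0}^∞ 2^{−i} φ(2^i a, 2^i b, 2^i c) < ∞ for all a,b,c. Then for every a ∈ A the limit d(a) := lim_{n→∞} 2^{−n} f(2^n a) exists, and d is the unique generalized Jordan derivation with ‖f(a) − d(a)‖ ≤ φ̃(a,a,0) for all a ∈ A. -/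

import Mathlib

open Filter Topology MulOpposite

set_option linter.unusedSectionVars false
set_option linter.unusedVariables false

section

variable {A X : Type*}
  [NormedRing A] [NormedAlgebra ℂ A] [CompleteSpace A]
  [NormedAddCommGroup X] [NormedSpace ℂ X] [CompleteSpace X]
  [Module A X] [Module Aᵐᵒᵖ X]
  [IsBoundedSMul A X] [IsBoundedSMul Aᵐᵒᵖ X]
  [SMulCommClass A Aᵐᵒᵖ X]
  [IsScalarTower ℂ A X] [IsScalarTower ℂ Aᵐᵒᵖ X]

/-- A Jordan derivation from `A` into the bimodule `X`: a `ℂ`-linear map `δ` with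
`δ(a²) = a·δ(a) + δ(a)·a`. -/
def IsJordanDeriv (δ : A → X) : Prop :=
  (∀ x y : A, δ (x + y) = δ x + δ y) ∧ (∀ (μ : ℂ) (x : A), δ (μ • x) = μ • δ x) ∧
    ∀ a : A, δ (a ^ 2) = a • δ a + op a • δ a

/-- A generalized Jordan derivation: a `ℂ`-linear map `d` such that there is a Jordan
derivation `δ` with `d(a²) = a·d(a) + δ(a)·a`. -/
def IsGenJordanDeriv (d : A → X) : Prop :=
  (∀ x y : A, d (x + y) = d x + d y) ∧ (∀ (μ : ℂ) (x : A), d (μ • x) = μ • d x) ∧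
    ∃ δ : A → X, IsJordanDeriv δ ∧ ∀ a : A, d (a ^ 2) = a • d a + op a • δ a

/-!
The direct method of Hyers. Taking `c = 0` in the inequality makes `n ↦ 2⁻ⁿ f (2ⁿ a)` Cauchy; its
limit `d` is additive and commutes with unimodular scalars, hence is `ℂ`-linear, because every
`w` with `‖w‖ ≤ 2` is a sum of two unimodular numbers.

No linear map is obtained from `g`. Instead, with `g_n y = 2⁻ⁿ g (2ⁿ y)`, the case `a = b = 0`
shows `(g_n y)·y → E y := d (y²) - y·d y`, and the case `c = 0` shows that `g_{2n}` is
asymptotically a derivation with respect to `g_n`. Together these give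
`E (uv) = u·E v·u + E u·v²` for commuting `u, v`, and comparing the four instances with
`u, v ∈ {x, x + 1}` leaves `d (x²) = x·d x + (d x - x·d 1)·x`, i.e. `d` is a generalized Jordan
derivation for the Jordan derivation `δ x = d x - x·d 1`.

Uniqueness: two `ℂ`-linear maps within the stated bound of `f` differ at `a` by at most `2⁻ⁿ` times
the bound at `2ⁿ a`, which is a tail of a convergent series.
-/

theorem Complex.exists_norm_eq_one_add_eq {w : ℂ} (hw : ‖w‖ ≤ 2) :
    ∃ μ₁ μ₂ : ℂ, ‖μ₁‖ = 1 ∧ ‖μ₂‖ = 1 ∧ μ₁ + μ₂ = w := by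
  rcases eq_or_ne w 0 with rfl | hw0
  · exact ⟨1, -1, by simp, by simp, by ring⟩
  -- `w = (w / ‖w‖) (r + s i) + (w / ‖w‖) (r - s i)` with `r = ‖w‖ / 2` and `r² + s² = 1`.
  set r : ℝ := ‖w‖ / 2
  set s : ℝ := √(1 - r ^ 2)
  have hrs : r ^ 2 + s ^ 2 = 1 := by
    have hr : r ≤ 1 := by simp only [r]; linarith
    have : r ^ 2 ≤ 1 := by nlinarith [show 0 ≤ r by positivity]
    rw [Real.sq_sqrt (by linarith)]
    ring
  have hu : ‖w / ‖w‖‖ = 1 := by simp [hw0]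
  refine ⟨w / ‖w‖ * (r + s * Complex.I), w / ‖w‖ * (r + (-s : ℝ) * Complex.I), ?_, ?_, ?_⟩
  · rw [norm_mul, hu, Complex.norm_add_mul_I, hrs, Real.sqrt_one, one_mul]
  · rw [norm_mul, hu, Complex.norm_add_mul_I, neg_sq, hrs, Real.sqrt_one, one_mul]
  · have : (‖w‖ : ℂ) ≠ 0 := by exact_mod_cast norm_ne_zero_iff.mpr hw0
    simp only [r, Complex.ofReal_div, Complex.ofReal_neg, Complex.ofReal_ofNat]
    field_simp
    ring

theorem AddMonoidHom.map_smul_of_map_unimodular_smul {E F : Type*} [AddCommGroup E] [Module ℂ E]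
    [AddCommGroup F] [Module ℂ F] (d : E →+ F)
    (hd : ∀ μ : ℂ, ‖μ‖ = 1 → ∀ a : E, d (μ • a) = μ • d a) (ζ : ℂ) (a : E) :
    d (ζ • a) = ζ • d a := by
  obtain ⟨n, hn⟩ := exists_nat_gt ‖ζ‖
  have hn0 : (n : ℂ) ≠ 0 := by
    have : (0 : ℝ) < n := (norm_nonneg ζ).trans_lt hn
    exact_mod_cast this.ne'
  obtain ⟨μ₁, μ₂, hμ₁, hμ₂, hμ⟩ := Complex.exists_norm_eq_one_add_eq (w := ζ / n) (by
    rw [norm_div, Complex.norm_natCast, div_le_iff₀ ((norm_nonneg ζ).trans_lt hn)]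
    linarith [norm_nonneg ζ])
  have hζ : ζ = n * (μ₁ + μ₂) := by rw [hμ]; field_simp
  rw [hζ, mul_smul, mul_smul, Nat.cast_smul_eq_nsmul, Nat.cast_smul_eq_nsmul, map_nsmul,
    add_smul, add_smul, map_add, hd μ₁ hμ₁, hd μ₂ hμ₂]

section Bimodule

variable {R M : Type*} [Ring R] [AddCommGroup M] [Module R M] [Module Rᵐᵒᵖ M]
  [SMulCommClass R Rᵐᵒᵖ M]

def mulSelfDefect (d : R → M) (y : R) : M := d (y * y) - y • d y

theorem map_mul_self_of_mulSelfDefect_mul [IsAddTorsionFree M] (d : R →+ M)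
    (hd : ∀ u v, Commute u v →
      mulSelfDefect d (u * v) = u • op u • mulSelfDefect d v + op v • op v • mulSelfDefect d u)
    (x : R) : d (x * x) = x • d x + op x • (d x - x • d 1) := by
  have h11 := hd (x + 1) (x + 1) (Commute.refl _)
  have h10 := hd (x + 1) x ((Commute.refl x).add_left (Commute.one_left x))
  have h01 := hd x (x + 1) ((Commute.refl x).add_right (Commute.one_right x))
  have h00 := hd x x (Commute.refl x)
  have hswap : ∀ m : M, op x • x • m = x • op x • m := fun m => (smul_comm x (op x) m).symm
  -- The mixed second difference over `s, t ∈ {0, 1}` of the identity for `u = x + s`,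
  -- `v = x + t`: the terms in `d (x ^ 4)` and `d (x ^ 3)` cancel.
  have h3 : (3 : ℕ) • (d (x * x) - (x • d x + op x • (d x - x • d 1))) = 0 := by
    unfold mulSelfDefect at h11 h10 h01 h00
    linear_combination (norm := skip) h11 - h10 - h01 + h00
    simp only [add_mul, mul_add, mul_one, one_mul, mul_assoc, map_add, smul_add, smul_sub,
      add_smul, op_add, op_one, mul_smul, one_smul, hswap]
    abel
  exact sub_eq_zero.mp (nsmul_right_injective three_ne_zero (h3.trans (smul_zero 3).symm))

end Bimodule

theorem isGenJordanDeriv_of_map_mul_self {d : A → X} (hadd : ∀ a b, d (a + b) = d a + d b)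
    (hsmul : ∀ (ζ : ℂ) a, d (ζ • a) = ζ • d a)
    (hsq : ∀ x, d (x * x) = x • d x + op x • (d x - x • d 1)) : IsGenJordanDeriv d := by
  refine ⟨hadd, hsmul, fun a => d a - a • d 1, ⟨fun a b => ?_, fun ζ a => ?_, fun a => ?_⟩,
    fun a => by rw [sq, hsq]⟩
  · dsimp only; rw [hadd, add_smul]; abel
  · dsimp only; rw [hsmul, smul_assoc, smul_sub]
  · dsimp only; rw [sq, hsq, mul_smul, smul_sub, smul_sub]; abel

theorem tendsto_two_pow_inv_mul_two_pow_inv_mul {s : ℕ → ℝ}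
    (hs : Summable fun n => ((2 : ℝ) ^ n)⁻¹ * s n) :
    Tendsto (fun n => ((2 : ℝ) ^ n)⁻¹ * (((2 : ℝ) ^ n)⁻¹ * s n)) atTop (𝓝 0) := by
  have h2 : Tendsto (fun n : ℕ => ((2 : ℝ) ^ n)⁻¹) atTop (𝓝 0) :=
    tendsto_inv_atTop_zero.comp (tendsto_pow_atTop_atTop_of_one_lt one_lt_two)
  simpa using h2.mul hs.tendsto_atTop_zero

theorem tendsto_two_pow_inv_mul_tsum {E : Type*} [MulAction ℂ E] (F : E → ℝ) (a : E) :
    Tendsto (fun n : ℕ => ((2 : ℝ) ^ n)⁻¹ *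
      ∑' i : ℕ, ((2 : ℝ) ^ i)⁻¹ * F ((2 : ℂ) ^ i • (2 : ℂ) ^ n • a)) atTop (𝓝 0) := by
  have htail := tendsto_sum_nat_add fun k => ((2 : ℝ) ^ k)⁻¹ * F ((2 : ℂ) ^ k • a)
  refine htail.congr fun n => ?_
  rw [← tsum_mul_left]
  congr 1 with i
  rw [smul_smul, ← pow_add, pow_add, mul_inv]
  ring

theorem eq_of_norm_sub_le_of_tendsto {E F : Type*} [AddCommGroup E] [Module ℂ E]
    [NormedAddCommGroup F] [NormedSpace ℂ F] {f d d' : E → F} (β : E → ℝ)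
    (hβ : ∀ a, Tendsto (fun n : ℕ => ((2 : ℝ) ^ n)⁻¹ * β ((2 : ℂ) ^ n • a)) atTop (𝓝 0))
    (hd : ∀ (ζ : ℂ) a, d (ζ • a) = ζ • d a) (hd' : ∀ (ζ : ℂ) a, d' (ζ • a) = ζ • d' a)
    (hfd : ∀ a, ‖f a - d a‖ ≤ β a) (hfd' : ∀ a, ‖f a - d' a‖ ≤ β a) : d = d' := by
  funext a
  have hle : ∀ n : ℕ, ‖d a - d' a‖ ≤ 2 * (((2 : ℝ) ^ n)⁻¹ * β ((2 : ℂ) ^ n • a)) := by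
    intro n
    set b := (2 : ℂ) ^ n • a
    have hscale : d a - d' a = ((2 : ℂ) ^ n)⁻¹ • ((f b - d' b) - (f b - d b)) := by
      rw [sub_sub_sub_cancel_left, hd, hd', ← smul_sub, inv_smul_smul₀ (by simp)]
    rw [hscale, norm_smul]
    have : ‖(f b - d' b) - (f b - d b)‖ ≤ 2 * β b := by
      linarith [norm_sub_le (f b - d' b) (f b - d b), hfd b, hfd' b]
    simp only [norm_inv, norm_pow, Complex.norm_ofNat]
    nlinarith [show (0 : ℝ) < ((2 : ℝ) ^ n)⁻¹ by positivity]
  have hlim := (hβ a).const_mul 2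
  rw [mul_zero] at hlim
  exact sub_eq_zero.mp (norm_le_zero_iff.mp (ge_of_tendsto hlim (Eventually.of_forall hle)))

noncomputable def rescale {E F : Type*} [SMul ℂ E] [SMul ℂ F] (f : E → F) (n : ℕ) (a : E) : F :=
  ((2 : ℂ) ^ n)⁻¹ • f ((2 : ℂ) ^ n • a)

theorem norm_two_pow_inv_smul {F : Type*} [NormedAddCommGroup F] [NormedSpace ℂ F] (n : ℕ)
    (v : F) : ‖((2 : ℂ) ^ n)⁻¹ • v‖ = ((2 : ℝ) ^ n)⁻¹ * ‖v‖ := by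
  simp [norm_smul]

theorem norm_rescale_mul_sub (k l m : A → X) (n : ℕ) (a b : A) :
    ‖rescale k (n + n) (a * b) - a • rescale l n b - op b • rescale m n a‖ =
      ((2 : ℝ) ^ n)⁻¹ * (((2 : ℝ) ^ n)⁻¹ *
        ‖k (((2 : ℂ) ^ n • a) * ((2 : ℂ) ^ n • b)) - ((2 : ℂ) ^ n • a) • l ((2 : ℂ) ^ n • b)
          - op ((2 : ℂ) ^ n • b) • m ((2 : ℂ) ^ n • a)‖) := by
  rw [← norm_two_pow_inv_smul, ← norm_two_pow_inv_smul]
  congr 1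
  have hc : (2 : ℂ) ^ n ≠ 0 := by simp
  simp only [rescale, pow_add]
  rw [smul_mul_smul_comm, op_smul, smul_assoc, smul_assoc, smul_comm a ((2 : ℂ) ^ n)⁻¹,
    smul_comm (op b) ((2 : ℂ) ^ n)⁻¹, mul_inv, mul_smul]
  simp only [smul_sub, inv_smul_smul₀ hc]

def IsApproxGenJordanPair (f g : A → X) (φ : A → A → A → ℝ) : Prop :=
  ∀ (a b c : A) (μ : ℂ), ‖μ‖ = 1 →
    max ‖f (μ • a + μ • b + c ^ 2) - μ • f a - μ • f b - c • f c - op c • g c‖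
      ‖g (μ • (a * b) + μ • c) - μ • a • g b - μ • op b • g a - μ • g c‖ ≤ φ a b c

namespace IsApproxGenJordanPair

variable {f g : A → X} {φ : A → A → A → ℝ}

theorem norm_map_smul_add_sub_le (h : IsApproxGenJordanPair f g φ) {μ : ℂ} (hμ : ‖μ‖ = 1)
    (a b : A) : ‖f (μ • a + μ • b) - μ • f a - μ • f b‖ ≤ φ a b 0 := by
  simpa using (le_max_left _ _).trans (h a b 0 μ hμ)

theorem norm_map_mul_self_sub_le (h : IsApproxGenJordanPair f g φ) (hf0 : f 0 = 0) (c : A) :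
    ‖f (c * c) - c • f c - op c • g c‖ ≤ φ 0 0 c := by
  simpa [hf0, sq] using (le_max_left _ _).trans (h 0 0 c 1 (by simp))

theorem norm_map_mul_sub_le (h : IsApproxGenJordanPair f g φ) (hg0 : g 0 = 0) (a b : A) :
    ‖g (a * b) - a • g b - op b • g a‖ ≤ φ a b 0 := by
  simpa [hg0] using (le_max_right _ _).trans (h a b 0 1 (by simp))

theorem norm_rescale_smul_add_sub_le (h : IsApproxGenJordanPair f g φ) (n : ℕ) {μ : ℂ}
    (hμ : ‖μ‖ = 1) (a b : A) :
    ‖rescale f n (μ • a + μ • b) - μ • rescale f n a - μ • rescale f n b‖ ≤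
      ((2 : ℝ) ^ n)⁻¹ * φ ((2 : ℂ) ^ n • a) ((2 : ℂ) ^ n • b) 0 := by
  have hscale : rescale f n (μ • a + μ • b) - μ • rescale f n a - μ • rescale f n b =
      ((2 : ℂ) ^ n)⁻¹ • (f (μ • (2 : ℂ) ^ n • a + μ • (2 : ℂ) ^ n • b)
        - μ • f ((2 : ℂ) ^ n • a) - μ • f ((2 : ℂ) ^ n • b)) := by
    simp only [rescale, smul_add, smul_sub]
    rw [smul_comm ((2 : ℂ) ^ n) μ, smul_comm ((2 : ℂ) ^ n) μ, smul_comm μ ((2 : ℂ) ^ n)⁻¹,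
      smul_comm μ ((2 : ℂ) ^ n)⁻¹]
  rw [hscale, norm_two_pow_inv_smul]
  gcongr
  exact h.norm_map_smul_add_sub_le hμ _ _

theorem dist_rescale_succ_le (h : IsApproxGenJordanPair f g φ) (n : ℕ) (a : A) :
    dist (rescale f n a) (rescale f (n + 1) a) ≤
      2⁻¹ * (((2 : ℝ) ^ n)⁻¹ * φ ((2 : ℂ) ^ n • a) ((2 : ℂ) ^ n • a) 0) := by
  set b := (2 : ℂ) ^ n • a
  have hscale : rescale f n a - rescale f (n + 1) a =
      ((2 : ℂ) ^ n)⁻¹ • (-(2⁻¹ : ℂ) • (f (b + b) - f b - f b)) := by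
    have : (2 : ℂ) ^ (n + 1) • a = b + b := by rw [pow_succ', mul_smul, two_smul]
    simp only [rescale]
    rw [this, pow_succ', mul_inv, mul_smul]
    module
  rw [dist_eq_norm, hscale, norm_two_pow_inv_smul, norm_smul, norm_neg, norm_inv,
    Complex.norm_ofNat, mul_left_comm]
  gcongr
  simpa using h.norm_map_smul_add_sub_le (μ := 1) (by simp) b b

theorem exists_tendsto_rescale (h : IsApproxGenJordanPair f g φ) (a : A)
    (hs : Summable fun n => ((2 : ℝ) ^ n)⁻¹ * φ ((2 : ℂ) ^ n • a) ((2 : ℂ) ^ n • a) 0) :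
    ∃ l, Tendsto (fun n => rescale f n a) atTop (𝓝 l) :=
  cauchySeq_tendsto_of_complete <| cauchySeq_of_summable_dist <|
    .of_nonneg_of_le (fun _ => dist_nonneg) (h.dist_rescale_succ_le · a) (hs.mul_left _)

theorem norm_sub_le_of_tendsto_rescale (h : IsApproxGenJordanPair f g φ) {a : A} {l : X}
    (hs : Summable fun n => ((2 : ℝ) ^ n)⁻¹ * φ ((2 : ℂ) ^ n • a) ((2 : ℂ) ^ n • a) 0)
    (hl : Tendsto (fun n => rescale f n a) atTop (𝓝 l)) :
    ‖f a - l‖ ≤ 2⁻¹ * ∑' n : ℕ, ((2 : ℝ) ^ n)⁻¹ * φ ((2 : ℂ) ^ n • a) ((2 : ℂ) ^ n • a) 0 := by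
  have := dist_le_tsum_of_dist_le_of_tendsto₀ _ (h.dist_rescale_succ_le · a) (hs.mul_left _) hl
  simpa [rescale, tsum_mul_left, dist_eq_norm] using this

theorem map_smul_add (h : IsApproxGenJordanPair f g φ) {d : A → X}
    (hd : ∀ a, Tendsto (fun n => rescale f n a) atTop (𝓝 (d a))) {μ : ℂ} (hμ : ‖μ‖ = 1) (a b : A)
    (hs : Summable fun n => ((2 : ℝ) ^ n)⁻¹ * φ ((2 : ℂ) ^ n • a) ((2 : ℂ) ^ n • b) 0) :
    d (μ • a + μ • b) = μ • d a + μ • d b := by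
  have hlim := ((hd (μ • a + μ • b)).sub ((hd a).const_smul μ)).sub ((hd b).const_smul μ)
  have hzero := squeeze_zero_norm (h.norm_rescale_smul_add_sub_le · hμ a b) hs.tendsto_atTop_zero
  rw [← sub_eq_zero, ← sub_sub, tendsto_nhds_unique hlim hzero]

theorem tendsto_op_smul_rescale (h : IsApproxGenJordanPair f g φ) (hf0 : f 0 = 0) {d : A → X}
    (hd : ∀ a, Tendsto (fun n => rescale f n a) atTop (𝓝 (d a))) (y : A)
    (hs : Summable fun n => ((2 : ℝ) ^ n)⁻¹ * φ 0 0 ((2 : ℂ) ^ n • y)) :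
    Tendsto (fun n => op y • rescale g n y) atTop (𝓝 (mulSelfDefect d y)) := by
  have hdefect : Tendsto (fun n => rescale f (n + n) (y * y) - y • rescale f n y
      - op y • rescale g n y) atTop (𝓝 0) := by
    refine squeeze_zero_norm (fun n => ?_) (tendsto_two_pow_inv_mul_two_pow_inv_mul hs)
    rw [norm_rescale_mul_sub]
    gcongr
    exact h.norm_map_mul_self_sub_le hf0 _
  have hmain :=
    ((hd (y * y)).comp (tendsto_id.atTop_add_atTop tendsto_id)).sub ((hd y).const_smul y)
  simpa [mulSelfDefect] using hmain.sub hdefect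

theorem tendsto_rescale_mul_sub (h : IsApproxGenJordanPair f g φ) (hg0 : g 0 = 0) (a b : A)
    (hs : Summable fun n => ((2 : ℝ) ^ n)⁻¹ * φ ((2 : ℂ) ^ n • a) ((2 : ℂ) ^ n • b) 0) :
    Tendsto (fun n => rescale g (n + n) (a * b) - a • rescale g n b - op b • rescale g n a)
      atTop (𝓝 0) := by
  refine squeeze_zero_norm (fun n => ?_) (tendsto_two_pow_inv_mul_two_pow_inv_mul hs)
  rw [norm_rescale_mul_sub]
  gcongr
  exact h.norm_map_mul_sub_le hg0 _ _

theorem mulSelfDefect_mul (h : IsApproxGenJordanPair f g φ) (hf0 : f 0 = 0) (hg0 : g 0 = 0)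
    {d : A → X} (hd : ∀ a, Tendsto (fun n => rescale f n a) atTop (𝓝 (d a)))
    (hsum : ∀ a b c : A, Summable fun i : ℕ =>
      ((2 : ℝ) ^ i)⁻¹ * φ ((2 : ℂ) ^ i • a) ((2 : ℂ) ^ i • b) ((2 : ℂ) ^ i • c))
    {u v : A} (huv : Commute u v) :
    mulSelfDefect d (u * v) = u • op u • mulSelfDefect d v + op v • op v • mulSelfDefect d u := by
  have hsq (y : A) := h.tendsto_op_smul_rescale hf0 hd y (by simpa using hsum 0 0 y)
  have hcomm (m₁ m₂ : X) :
      op (u * v) • (u • m₁ + op v • m₂) = u • op u • op v • m₁ + op v • op v • op u • m₂ := by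
    rw [smul_add, ← smul_comm u (op (u * v))]
    simp only [← mul_smul, ← op_mul, huv.eq, mul_assoc]
  have hleibniz := (h.tendsto_rescale_mul_sub hg0 u v (by simpa using hsum u v 0)).const_smul
    (op (u * v))
  have hsplit : ∀ n, op (u * v) • rescale g (n + n) (u * v) =
      (u • op u • op v • rescale g n v + op v • op v • op u • rescale g n u) +
        op (u * v) • (rescale g (n + n) (u * v) - u • rescale g n v - op v • rescale g n u) := by
    intro n
    rw [← hcomm, ← smul_add]
    abel_nf
  refine tendsto_nhds_unique ((hsq (u * v)).comp (tendsto_id.atTop_add_atTop tendsto_id)) ?_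
  simp only [Function.comp_def, hsplit]
  simpa using ((((hsq v).const_smul (op u)).const_smul u).add
    (((hsq u).const_smul (op v)).const_smul (op v))).add hleibniz

end IsApproxGenJordanPair

theorem stmt_general (f g : A → X) (φ : A → A → A → ℝ)
    (hf0 : f 0 = 0) (hg0 : g 0 = 0)
    (h : ∀ (a b c : A) (μ : ℂ), ‖μ‖ = 1 →
      max ‖f (μ • a + μ • b + c ^ 2) - μ • f a - μ • f b - c • f c - op c • g c‖
        ‖g (μ • (a * b) + μ • c) - μ • a • g b - μ • op b • g a - μ • g c‖ ≤ φ a b c)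
    (hsum : ∀ a b c : A, Summable fun i : ℕ =>
      ((2 : ℝ) ^ i)⁻¹ * φ ((2 : ℂ) ^ i • a) ((2 : ℂ) ^ i • b) ((2 : ℂ) ^ i • c)) :
    ∃ d : A → X, (∀ a : A, Tendsto (fun n : ℕ => ((2 : ℂ) ^ n)⁻¹ • f ((2 : ℂ) ^ n • a)) atTop (𝓝 (d a))) ∧
      IsGenJordanDeriv d ∧ (∀ a : A, ‖f a - d a‖ ≤ 2⁻¹ * ∑' i : ℕ, ((2 : ℝ) ^ i)⁻¹ * φ ((2 : ℂ) ^ i • a) ((2 : ℂ) ^ i • a) 0) ∧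
      ∀ d' : A → X, IsGenJordanDeriv d' → (∀ a : A, ‖f a - d' a‖ ≤ 2⁻¹ * ∑' i : ℕ, ((2 : ℝ) ^ i)⁻¹ * φ ((2 : ℂ) ^ i • a) ((2 : ℂ) ^ i • a) 0) → d' = d := by
  have h : IsApproxGenJordanPair f g φ := h
  have hsum₀ (a b : A) :
      Summable fun n => ((2 : ℝ) ^ n)⁻¹ * φ ((2 : ℂ) ^ n • a) ((2 : ℂ) ^ n • b) 0 := by
    simpa using hsum a b 0
  choose d hd using fun a => h.exists_tendsto_rescale a (hsum₀ a a)
  have hadd (a b : A) : d (a + b) = d a + d b := by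
    simpa using h.map_smul_add hd (μ := 1) (by simp) a b (hsum₀ a b)
  let D : A →+ X := AddMonoidHom.mk' d hadd
  have hsmul : ∀ (ζ : ℂ) a, d (ζ • a) = ζ • d a := D.map_smul_of_map_unimodular_smul
    fun μ hμ a => by
      simpa [D, show d 0 = 0 from D.map_zero] using h.map_smul_add hd hμ a 0 (hsum₀ a 0)
  have : IsAddTorsionFree X := .of_isTorsionFree ℂ X
  have hsq := map_mul_self_of_mulSelfDefect_mul D fun _ _ huv =>
    h.mulSelfDefect_mul hf0 hg0 hd hsum huv
  have hbound (a : A) := h.norm_sub_le_of_tendsto_rescale (hsum₀ a a) (hd a)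
  refine ⟨d, hd, isGenJordanDeriv_of_map_mul_self hadd hsmul hsq, hbound, fun d' hd' hbound' => ?_⟩
  refine (eq_of_norm_sub_le_of_tendsto _ (fun a => ?_) hsmul hd'.2.1 hbound hbound').symm
  simpa [mul_left_comm] using (tendsto_two_pow_inv_mul_tsum (fun x => φ x x 0) a).const_mul 2⁻¹

theorem stmt (f g : A → X) (φ : A → A → A → ℝ)
    (hφ0 : ∀ a b c : A, 0 ≤ φ a b c)
    (hf0 : f 0 = 0) (hg0 : g 0 = 0) (hg1 : g 1 = 0)
    (h : ∀ (a b c : A) (μ : ℂ), ‖μ‖ = 1 →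
      max ‖f (μ • a + μ • b + c ^ 2) - μ • f a - μ • f b - c • f c - op c • g c‖
        ‖g (μ • (a * b) + μ • c) - μ • a • g b - μ • op b • g a - μ • g c‖ ≤ φ a b c)
    (hsum : ∀ a b c : A, Summable fun i : ℕ =>
      ((2 : ℝ) ^ i)⁻¹ * φ ((2 : ℂ) ^ i • a) ((2 : ℂ) ^ i • b) ((2 : ℂ) ^ i • c)) :
    ∃ d : A → X, (∀ a : A, Tendsto (fun n : ℕ => ((2 : ℂ) ^ n)⁻¹ • f ((2 : ℂ) ^ n • a)) atTop (𝓝 (d a))) ∧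
      IsGenJordanDeriv d ∧ (∀ a : A, ‖f a - d a‖ ≤ 2⁻¹ * ∑' i : ℕ, ((2 : ℝ) ^ i)⁻¹ * φ ((2 : ℂ) ^ i • a) ((2 : ℂ) ^ i • a) 0) ∧
      ∀ d' : A → X, IsGenJordanDeriv d' → (∀ a : A, ‖f a - d' a‖ ≤ 2⁻¹ * ∑' i : ℕ, ((2 : ℝ) ^ i)⁻¹ * φ ((2 : ℂ) ^ i • a) ((2 : ℂ) ^ i • a) 0) → d' = d :=
  stmt_general f g φ hf0 hg0 h hsum
end
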